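/- Let α > 0, s₀ ∈ (0, 1/2], 0 < T ≤ (1−s₀)/α, let u_{in0} be C¹ and u_{in1} be continuous on [s₀,1], let u₀, u₁, w be as defined in the context, and let s : [0,T] → ℝ be continuously differentiable with s(0) = s₀ and −α < ṡ < 0; write ṡ₀ = ṡ(0). Define u piecewise: on D^{(I)} = {s₀+αt < x < 1} by u = w + (u₀(x−αt)+u₀(x+αt))/2 + (1/(2α))∫_{x−αt}^{x+αt} u₁, and on D^{(II)} = {s(t) < x < s₀+αt} by u = w + (u₀(x+αt) − u₀(s(t̂)+αt̂))/2 + (1/(2α))∫_{s(t̂)+αt̂}^{x+αt} u₁, where t̂ solves s(t̂) − αt̂ = x − αt. Then at any point (x̄,t̄) on the characteristic Σ : x − αt = s₀ with 0 < t̄ < T and x̄ + α t̄ < 1, the one-sided limits of ∂u/∂t from D^{(II)} and from D^{(I)} both exist and their difference equals ( α/(ṡ₀ − α) )·( ṡ₀·u_{in0}′(s₀) + u_{in1}(s₀) ). In particular, ∂u/∂t extends continuously across Σ if and only if ṡ₀·u_{in0}′(s₀) + u_{in1}(s₀) = 0 (condition (A)). -/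

import Mathlib

/-!
Away from `x = 1`, the `t`-derivative of a d'Alembert formula is the sum of a wave
`(α u₀′ + u₁)/2` taken at `x + αt` and a second wave carried along `x − αt = const`.
In `D^{(I)}` the second wave is `−(α u₀′ − u₁)/2` taken at `x − αt`, which tends to its value
at `s₀` on `Σ`. In `D^{(II)}` it is the reflection of the first wave at the boundary `x = s(t)`:
since `dt̂/dt = α/(α − ṡ(t̂))`, the foot `s(t̂) + αt̂` moves with speed `α (α + ṡ)/(α − ṡ)`, and the
second wave is `−((α + ṡ)/(α − ṡ)) (α u₀′ + u₁)/2` taken at the foot. On `Σ` we have `t̂ = 0`, so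
its limit involves `ṡ₀`, and the two limits differ by the stated jump.

Because `s` decreases, `t̂` is `1`-Lipschitz in `t`; this continuity is what the inverse function
rule needs to differentiate `t̂`.
-/

open MeasureTheory intervalIntegral Filter

/-- Odd extension about `x = 1`: equals `f x` for `x ≤ 1` and `−f (2−x)` for `x > 1`. -/
noncomputable def oddExt (f : ℝ → ℝ) (x : ℝ) : ℝ :=
  if x ≤ 1 then f x else -f (2 - x)

/-- The correction term `w(x,t) = μ((x+αt−1)/α)` if `x+αt ≥ 1`, else `0`,
where `μ(t) = u_{in1}(1)·t + u_{in0}(1)`. -/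
noncomputable def wFun (α : ℝ) (uin0 uin1 : ℝ → ℝ) (x t : ℝ) : ℝ :=
  if 1 ≤ x + α * t then uin1 1 * ((x + α * t - 1) / α) + uin0 1 else 0

/-- D'Alembert representation of `u` in `D^{(I)}`. -/
noncomputable def uRegI (α : ℝ) (uin0 uin1 : ℝ → ℝ) (x t : ℝ) : ℝ :=
  wFun α uin0 uin1 x t + (oddExt uin0 (x - α * t) + oddExt uin0 (x + α * t)) / 2
    + (1 / (2 * α)) * ∫ η in (x - α * t)..(x + α * t), oddExt uin1 η

/-- D'Alembert representation of `u` in `D^{(II)}`, built from the hitting time `t̂`. -/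
noncomputable def uRegII (α : ℝ) (uin0 uin1 s : ℝ → ℝ) (th : ℝ × ℝ → ℝ) (x t : ℝ) : ℝ :=
  wFun α uin0 uin1 x t
    + (oddExt uin0 (x + α * t) - oddExt uin0 (s (th (x, t)) + α * th (x, t))) / 2
    + (1 / (2 * α)) *
        ∫ η in (s (th (x, t)) + α * th (x, t))..(x + α * t), oddExt uin1 η

open Set Topology

theorem ContinuousOn.tendsto_comp_of_eventually_mem {X : Type*} {l : Filter X} {f : ℝ → ℝ}
    {S : Set ℝ} {c : ℝ} {h : X → ℝ} (hf : ContinuousOn f S) (hc : c ∈ S)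
    (hh : Tendsto h l (𝓝 c)) (hS : ∀ᶠ p in l, h p ∈ S) :
    Tendsto (fun p => f (h p)) l (𝓝 (f c)) :=
  (hf c hc).tendsto.comp (tendsto_nhdsWithin_iff.2 ⟨hh, hS⟩)

theorem tendsto_deriv_of_eventually_hasDerivAt {u : ℝ → ℝ → ℝ} {D : ℝ × ℝ → ℝ}
    {l : Filter (ℝ × ℝ)} {L : ℝ} (hu : ∀ᶠ p in l, HasDerivAt (u p.1) (D p) p.2)
    (hD : Tendsto D l (𝓝 L)) : Tendsto (fun p : ℝ × ℝ => deriv (u p.1) p.2) l (𝓝 L) :=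
  hD.congr' (hu.mono fun _ hp => hp.deriv.symm)

theorem hasDerivAt_of_comp_eq_affine {f τ : ℝ → ℝ} {f' a b t : ℝ} (ha : a ≠ 0)
    (hτ : ContinuousAt τ t) (hf : HasDerivAt f f' (τ t)) (hf' : f' ≠ 0)
    (hfτ : ∀ᶠ t' in 𝓝 t, f (τ t') = a * t' + b) : HasDerivAt τ (a / f') t := by
  set G : ℝ → ℝ := fun y => τ ((y - b) / a)
  have hGτ : ∀ t', G (a * t' + b) = τ t' := fun t' => by simp only [G, add_sub_cancel_right, mul_div_cancel_left₀ _ ha]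
  have hlin : Tendsto (fun y => (y - b) / a) (𝓝 (a * t + b)) (𝓝 t) := by
    simpa [ha] using ((continuous_sub_right b).div_const a).tendsto (a * t + b)
  have hG : HasDerivAt G f'⁻¹ (a * t + b) := by
    refine .of_local_left_inverse ?_ (hGτ t ▸ hf) hf' ((hlin.eventually hfτ).mono fun y hy => ?_)
    · rw [ContinuousAt, hGτ]
      exact hτ.tendsto.comp hlin
    · simp only [G, hy]
      field_simp
      ring
  have := hG.comp t ((hasDerivAt_id t).const_mul a |>.add_const b)
  simpa [Function.comp_def, hGτ, div_eq_inv_mul] using this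

theorem hasDerivAt_integral_of_mem_Ioo {f : ℝ → ℝ} {c d : ℝ} (hf : ContinuousOn f (Icc c d))
    {u v : ℝ → ℝ} {u' v' t : ℝ} (hu : HasDerivAt u u' t) (hv : HasDerivAt v v' t)
    (hut : u t ∈ Ioo c d) (hvt : v t ∈ Ioo c d) :
    HasDerivAt (fun t => ∫ η in u t..v t, f η) (f (v t) * v' - f (u t) * u') t := by
  have hc : c ∈ Icc c d := ⟨le_rfl, (hut.1.trans hut.2).le⟩
  have hint : ∀ z ∈ Icc c d, IntervalIntegrable f MeasureTheory.volume c z := fun z hz =>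
    (hf.mono (uIcc_subset_Icc hc hz)).intervalIntegrable
  set F : ℝ → ℝ := fun z => ∫ η in c..z, f η
  have hF : ∀ z ∈ Ioo c d, HasDerivAt F (f z) z := fun z hz =>
    integral_hasDerivAt_right (hint z (Ioo_subset_Icc_self hz))
      ((hf.mono Ioo_subset_Icc_self).stronglyMeasurableAtFilter isOpen_Ioo z hz)
      (hf.continuousAt (Icc_mem_nhds hz.1 hz.2))
  have heq : (fun t => ∫ η in u t..v t, f η) =ᶠ[𝓝 t] fun t => F (v t) - F (u t) := by
    filter_upwards [hu.continuousAt.preimage_mem_nhds (Icc_mem_nhds hut.1 hut.2),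
      hv.continuousAt.preimage_mem_nhds (Icc_mem_nhds hvt.1 hvt.2)] with t' hu' hv'
    exact (integral_interval_sub_left (hint _ hv') (hint _ hu')).symm
  exact (((hF _ hvt).comp t hv).sub ((hF _ hut).comp t hu)).congr_of_eventuallyEq heq

theorem hasDerivAt_add_mul (x α t : ℝ) : HasDerivAt (fun t' => x + α * t') α t := by
  simpa using ((hasDerivAt_id t).const_mul α).const_add x

theorem hasDerivAt_sub_mul (x α t : ℝ) : HasDerivAt (fun t' => x - α * t') (-α) t := by
  simpa using ((hasDerivAt_id t).const_mul α).const_sub x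

theorem antitoneOn_Icc_of_hasDerivWithinAt_nonpos {f f' : ℝ → ℝ} {a b : ℝ}
    (hf : ∀ t ∈ Icc a b, HasDerivWithinAt f (f' t) (Icc a b) t)
    (hf' : ∀ t ∈ Icc a b, f' t ≤ 0) : AntitoneOn f (Icc a b) :=
  antitoneOn_of_hasDerivWithinAt_nonpos (convex_Icc a b) (fun t ht => (hf t ht).continuousWithinAt)
    (fun t ht => (hf t (interior_subset ht)).mono interior_subset)
    (fun t ht => hf' t (interior_subset ht))

theorem strictMonoOn_Icc_of_hasDerivWithinAt_pos {f f' : ℝ → ℝ} {a b : ℝ}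
    (hf : ∀ t ∈ Icc a b, HasDerivWithinAt f (f' t) (Icc a b) t)
    (hf' : ∀ t ∈ Icc a b, 0 < f' t) : StrictMonoOn f (Icc a b) :=
  strictMonoOn_of_hasDerivWithinAt_pos (convex_Icc a b) (fun t ht => (hf t ht).continuousWithinAt)
    (fun t ht => (hf t (interior_subset ht)).mono interior_subset)
    (fun t ht => hf' t (interior_subset ht))

theorem abs_sub_le_of_antitoneOn {s : ℝ → ℝ} {S : Set ℝ} {α x τ₁ τ₂ t₁ t₂ : ℝ} (hα : 0 < α)
    (hs : AntitoneOn s S) (h₁ : τ₁ ∈ S) (h₂ : τ₂ ∈ S) (e₁ : s τ₁ - α * τ₁ = x - α * t₁)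
    (e₂ : s τ₂ - α * τ₂ = x - α * t₂) : |τ₁ - τ₂| ≤ |t₁ - t₂| := by
  wlog h : τ₂ ≤ τ₁ generalizing τ₁ τ₂ t₁ t₂
  · rw [abs_sub_comm, abs_sub_comm t₁]
    exact this h₂ h₁ e₂ e₁ (le_of_not_ge h)
  have hsτ := hs h₂ h₁ h
  have : α * (τ₁ - τ₂) ≤ α * (t₁ - t₂) := by linarith
  rw [abs_of_nonneg (sub_nonneg.2 h)]
  exact (le_of_mul_le_mul_left this hα).trans (le_abs_self _)

theorem oddExt_of_le {f : ℝ → ℝ} {x : ℝ} (hx : x ≤ 1) : oddExt f x = f x := if_pos hx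

theorem hasDerivAt_oddExt {f : ℝ → ℝ} {f' a x : ℝ} (hf : HasDerivWithinAt f f' (Icc a 1) x)
    (hx : x ∈ Ioo a 1) : HasDerivAt (oddExt f) f' x :=
  (hf.hasDerivAt (Icc_mem_nhds hx.1 hx.2)).congr_of_eventuallyEq
    ((eventually_lt_nhds hx.2).mono fun _ hy => oddExt_of_le hy.le)

theorem continuousOn_oddExt {f : ℝ → ℝ} {a : ℝ} (hf : ContinuousOn f (Icc a 1)) :
    ContinuousOn (oddExt f) (Icc a 1) :=
  hf.congr fun _ hx => oddExt_of_le hx.2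

theorem hasDerivAt_wFun_of_lt {α x t : ℝ} {uin0 uin1 : ℝ → ℝ} (h : x + α * t < 1) :
    HasDerivAt (wFun α uin0 uin1 x) 0 t := by
  refine (hasDerivAt_const t 0).congr_of_eventuallyEq ?_
  have hc : ContinuousAt (fun t' => x + α * t') t := by fun_prop
  filter_upwards [hc.eventually_lt continuousAt_const h] with t' ht'
  exact if_neg (not_le.2 ht')

section Waves

variable {α s₀ : ℝ} {uin0 uin1 uin0' : ℝ → ℝ}

theorem hasDerivAt_uRegI (hα : α ≠ 0)
    (huin0' : ∀ x ∈ Icc s₀ 1, HasDerivWithinAt uin0 (uin0' x) (Icc s₀ 1) x)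
    (huin1 : ContinuousOn uin1 (Icc s₀ 1)) {x t : ℝ}
    (hm : x - α * t ∈ Ioo s₀ 1) (hp : x + α * t ∈ Ioo s₀ 1) :
    HasDerivAt (uRegI α uin0 uin1 x)
      ((α * uin0' (x + α * t) + uin1 (x + α * t)) / 2
        - (α * uin0' (x - α * t) - uin1 (x - α * t)) / 2) t := by
  have h0m := (hasDerivAt_oddExt (huin0' _ (Ioo_subset_Icc_self hm)) hm).comp t
    (hasDerivAt_sub_mul x α t)
  have h0p := (hasDerivAt_oddExt (huin0' _ (Ioo_subset_Icc_self hp)) hp).comp t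
    (hasDerivAt_add_mul x α t)
  have h1 := hasDerivAt_integral_of_mem_Ioo (continuousOn_oddExt huin1)
    (hasDerivAt_sub_mul x α t) (hasDerivAt_add_mul x α t) hm hp
  refine (((hasDerivAt_wFun_of_lt hp.2).add ((h0m.add h0p).div_const 2)).add
    (h1.const_mul (1 / (2 * α)))).congr_deriv ?_
  rw [oddExt_of_le hm.2.le, oddExt_of_le hp.2.le]
  field_simp
  ring

theorem hasDerivAt_uRegII (hα : α ≠ 0)
    (huin0' : ∀ x ∈ Icc s₀ 1, HasDerivWithinAt uin0 (uin0' x) (Icc s₀ 1) x)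
    (huin1 : ContinuousOn uin1 (Icc s₀ 1)) {s : ℝ → ℝ} {th : ℝ × ℝ → ℝ} {x t r : ℝ}
    (hA : HasDerivAt (fun t' => s (th (x, t')) + α * th (x, t')) (α * r) t)
    (hAt : s (th (x, t)) + α * th (x, t) ∈ Ioo s₀ 1) (hp : x + α * t ∈ Ioo s₀ 1) :
    HasDerivAt (uRegII α uin0 uin1 s th x)
      ((α * uin0' (x + α * t) + uin1 (x + α * t)) / 2
        - r * (α * uin0' (s (th (x, t)) + α * th (x, t))
          + uin1 (s (th (x, t)) + α * th (x, t))) / 2) t := by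
  have h0A := (hasDerivAt_oddExt (huin0' _ (Ioo_subset_Icc_self hAt)) hAt).comp t hA
  have h0p := (hasDerivAt_oddExt (huin0' _ (Ioo_subset_Icc_self hp)) hp).comp t
    (hasDerivAt_add_mul x α t)
  have h1 := hasDerivAt_integral_of_mem_Ioo (continuousOn_oddExt huin1) hA
    (hasDerivAt_add_mul x α t) hAt hp
  refine (((hasDerivAt_wFun_of_lt hp.2).add ((h0p.sub h0A).div_const 2)).add
    (h1.const_mul (1 / (2 * α)))).congr_deriv ?_
  rw [oddExt_of_le hAt.2.le, oddExt_of_le hp.2.le]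
  field_simp
  ring

end Waves

theorem tendsto_deriv_uRegI {α s₀ xb tb : ℝ} {uin0 uin1 uin0' : ℝ → ℝ} (hα : 0 < α)
    (huin0' : ∀ x ∈ Icc s₀ 1, HasDerivWithinAt uin0 (uin0' x) (Icc s₀ 1) x)
    (huin0'c : ContinuousOn uin0' (Icc s₀ 1)) (huin1 : ContinuousOn uin1 (Icc s₀ 1))
    (htb : 0 < tb) (hxb : xb - α * tb = s₀) (hxb1 : xb + α * tb < 1) :
    Tendsto (fun p : ℝ × ℝ => deriv (uRegI α uin0 uin1 p.1) p.2)
      (𝓝[{p | s₀ + α * p.2 < p.1}] (xb, tb))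
      (𝓝 ((α * uin0' (xb + α * tb) + uin1 (xb + α * tb)) / 2
        - (α * uin0' s₀ - uin1 s₀) / 2)) := by
  set l := 𝓝[{p : ℝ × ℝ | s₀ + α * p.2 < p.1}] (xb, tb)
  have hs₀b : s₀ < xb + α * tb := by nlinarith
  have hm : Tendsto (fun p : ℝ × ℝ => p.1 - α * p.2) l (𝓝 s₀) :=
    hxb ▸ ((by fun_prop : Continuous fun p : ℝ × ℝ => p.1 - α * p.2).tendsto _).mono_left
      nhdsWithin_le_nhds
  have hp : Tendsto (fun p : ℝ × ℝ => p.1 + α * p.2) l (𝓝 (xb + α * tb)) :=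
    ((by fun_prop : Continuous fun p : ℝ × ℝ => p.1 + α * p.2).tendsto _).mono_left
      nhdsWithin_le_nhds
  have hmI : ∀ᶠ p in l, p.1 - α * p.2 ∈ Ioo s₀ 1 := by
    filter_upwards [self_mem_nhdsWithin, hm.eventually (eventually_lt_nhds (hs₀b.trans hxb1))]
      with p hp h1
    exact ⟨by linarith [show s₀ + α * p.2 < p.1 from hp], h1⟩
  have hpI : ∀ᶠ p in l, p.1 + α * p.2 ∈ Ioo s₀ 1 := hp.eventually (Ioo_mem_nhds hs₀b hxb1)
  refine tendsto_deriv_of_eventually_hasDerivAt ((hmI.and hpI).mono fun p hp =>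
    hasDerivAt_uRegI hα.ne' huin0' huin1 hp.1 hp.2) ?_
  have hs₀I : s₀ ∈ Icc s₀ 1 := ⟨le_rfl, (hs₀b.trans hxb1).le⟩
  have hbI : xb + α * tb ∈ Icc s₀ 1 := ⟨hs₀b.le, hxb1.le⟩
  have hmI' := hmI.mono fun _ h => Ioo_subset_Icc_self h
  have hpI' := hpI.mono fun _ h => Ioo_subset_Icc_self h
  exact ((((huin0'c.tendsto_comp_of_eventually_mem hbI hp hpI').const_mul α).add
    (huin1.tendsto_comp_of_eventually_mem hbI hp hpI')).div_const 2).sub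
    ((((huin0'c.tendsto_comp_of_eventually_mem hs₀I hm hmI').const_mul α).sub
    (huin1.tendsto_comp_of_eventually_mem hs₀I hm hmI')).div_const 2)

/-- `th (x, t) ∈ [0, t]` is the time at which the characteristic `x - α t = const` through
`(x, t)` meets the boundary `x = s t`. -/
def IsHitTime (α s₀ T : ℝ) (s : ℝ → ℝ) (th : ℝ × ℝ → ℝ) : Prop :=
  ∀ x t : ℝ, 0 ≤ t → t ≤ T → s t ≤ x → x ≤ s₀ + α * t →
    th (x, t) ∈ Icc 0 t ∧ s (th (x, t)) - α * th (x, t) = x - α * t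

section HitTime

variable {α s₀ T : ℝ} {s s' : ℝ → ℝ} {th : ℝ × ℝ → ℝ}

theorem hitTime_pos (hs0 : s 0 = s₀)
    (hth : IsHitTime α s₀ T s th)
    {x t : ℝ} (ht : t ∈ Icc 0 T) (hst : s t ≤ x) (hx : x < s₀ + α * t) : 0 < th (x, t) := by
  obtain ⟨⟨h0, -⟩, he⟩ := hth x t ht.1 ht.2 hst hx.le
  refine h0.lt_of_ne fun h => ?_
  rw [← h, hs0] at he
  linarith

theorem hasDerivAt_hitTime (hα : 0 < α)
    (hs' : ∀ t ∈ Icc 0 T, HasDerivWithinAt s (s' t) (Icc 0 T) t)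
    (hs'0 : ∀ t ∈ Icc 0 T, s' t < 0)
    (hth : IsHitTime α s₀ T s th)
    {x t : ℝ} (ht : t ∈ Ioo 0 T) (hst : s t < x) (hx : x < s₀ + α * t) (hτ : 0 < th (x, t)) :
    HasDerivAt (fun t' => th (x, t')) (α / (α - s' (th (x, t)))) t := by
  have hsc : ContinuousAt s t :=
    ((hs' t (Ioo_subset_Icc_self ht)).hasDerivAt (Icc_mem_nhds ht.1 ht.2)).continuousAt
  have hrel : ∀ᶠ t' in 𝓝 t, th (x, t') ∈ Icc 0 t' ∧ t' ≤ T ∧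
      s (th (x, t')) - α * th (x, t') = x - α * t' := by
    filter_upwards [Icc_mem_nhds ht.1 ht.2, hsc.eventually_lt continuousAt_const hst,
      continuousAt_const.eventually_lt (by fun_prop : ContinuousAt (fun t' => s₀ + α * t') t) hx]
      with t' ht' hst' hx'
    obtain ⟨hm, he⟩ := hth x t' ht'.1 ht'.2 hst'.le hx'.le
    exact ⟨hm, ht'.2, he⟩
  obtain ⟨hτt, -, hτe⟩ := hrel.self_of_nhds
  have hanti := antitoneOn_Icc_of_hasDerivWithinAt_nonpos hs' fun t ht => (hs'0 t ht).le
  have hcont : ContinuousAt (fun t' => th (x, t')) t := by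
    refine tendsto_iff_dist_tendsto_zero.2 (squeeze_zero' (g := fun t' => dist t' t)
      (Eventually.of_forall fun _ => dist_nonneg) (hrel.mono fun t' h => ?_) ?_)
    · exact abs_sub_le_of_antitoneOn hα hanti ⟨h.1.1, h.1.2.trans h.2.1⟩
        ⟨hτt.1, hτt.2.trans ht.2.le⟩ h.2.2 hτe
    · simpa only [id, dist_self] using (tendsto_id (x := 𝓝 t)).dist (tendsto_const_nhds (x := t))
  have hτI : th (x, t) ∈ Ioo 0 T := ⟨hτ, hτt.2.trans_lt ht.2⟩
  have hθ : HasDerivAt (fun τ => s τ - α * τ) (s' (th (x, t)) - α) (th (x, t)) :=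
    ((hs' _ (Ioo_subset_Icc_self hτI)).hasDerivAt (Icc_mem_nhds hτI.1 hτI.2)).sub
      ((hasDerivAt_id _).const_mul α) |>.congr_deriv (by rw [mul_one])
  have hθ' : s' (th (x, t)) - α ≠ 0 := by linarith [hs'0 _ (Ioo_subset_Icc_self hτI)]
  refine (hasDerivAt_of_comp_eq_affine (b := x) (neg_ne_zero.2 hα.ne') hcont hθ hθ'
    (hrel.mono fun t' h => by linarith [h.2.2])).congr_deriv ?_
  rw [← neg_div_neg_eq, neg_neg, neg_sub]

end HitTime

section RegionII

variable {α s₀ T : ℝ} {uin0 uin1 uin0' s s' : ℝ → ℝ} {th : ℝ × ℝ → ℝ}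

theorem foot_mem_Ioo (hα : 0 < α) (hs0 : s 0 = s₀)
    (hs' : ∀ t ∈ Icc 0 T, HasDerivWithinAt s (s' t) (Icc 0 T) t)
    (hs'α : ∀ t ∈ Icc 0 T, -α < s' t)
    (hth : IsHitTime α s₀ T s th)
    {x t : ℝ} (ht : t ∈ Icc 0 T) (hst : s t ≤ x) (hx : x < s₀ + α * t) (hx1 : x + α * t < 1) :
    s (th (x, t)) + α * th (x, t) ∈ Ioo s₀ 1 := by
  obtain ⟨hτt, hτe⟩ := hth x t ht.1 ht.2 hst hx.le
  have hτ : 0 < th (x, t) := hitTime_pos hs0 hth ht hst hx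
  have hmono : StrictMonoOn (fun τ => s τ + α * τ) (Icc 0 T) :=
    strictMonoOn_Icc_of_hasDerivWithinAt_pos (fun t ht => (hs' t ht).add
      ((hasDerivWithinAt_id t _).const_mul α)) fun t ht => by linarith [hs'α t ht]
  refine ⟨?_, by nlinarith [mul_le_mul_of_nonneg_left hτt.2 hα.le]⟩
  simpa [hs0] using hmono ⟨le_rfl, (hτ.trans_le (hτt.2.trans ht.2)).le⟩
    ⟨hτt.1, hτt.2.trans ht.2⟩ hτ

theorem hasDerivAt_uRegII_of_mem (hα : 0 < α)
    (huin0' : ∀ x ∈ Icc s₀ 1, HasDerivWithinAt uin0 (uin0' x) (Icc s₀ 1) x)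
    (huin1 : ContinuousOn uin1 (Icc s₀ 1)) (hs0 : s 0 = s₀)
    (hs' : ∀ t ∈ Icc 0 T, HasDerivWithinAt s (s' t) (Icc 0 T) t)
    (hsb : ∀ t ∈ Icc 0 T, -α < s' t ∧ s' t < 0)
    (hth : IsHitTime α s₀ T s th)
    {x t : ℝ} (ht : t ∈ Ioo 0 T) (hst : s t < x) (hx : x < s₀ + α * t)
    (hp : x + α * t ∈ Ioo s₀ 1) :
    HasDerivAt (uRegII α uin0 uin1 s th x)
      ((α * uin0' (x + α * t) + uin1 (x + α * t)) / 2
        - (α + s' (th (x, t))) / (α - s' (th (x, t)))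
          * (α * uin0' (s (th (x, t)) + α * th (x, t))
            + uin1 (s (th (x, t)) + α * th (x, t))) / 2) t := by
  set τ := th (x, t)
  have hτ : 0 < τ := hitTime_pos hs0 hth (Ioo_subset_Icc_self ht) hst.le hx
  have hτI : τ ∈ Ioo 0 T := ⟨hτ, ((hth x t ht.1.le ht.2.le hst.le hx.le).1.2).trans_lt ht.2⟩
  have hdτ := hasDerivAt_hitTime hα hs' (fun t ht => (hsb t ht).2) hth ht hst hx hτ
  have hfoot : HasDerivAt (fun t' => s (th (x, t')) + α * th (x, t'))
      (α * ((α + s' τ) / (α - s' τ))) t :=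
    ((((hs' τ (Ioo_subset_Icc_self hτI)).hasDerivAt (Icc_mem_nhds hτI.1 hτI.2)).comp t hdτ).add
      (hdτ.const_mul α)).congr_deriv (by ring)
  exact hasDerivAt_uRegII hα.ne' huin0' huin1 hfoot (foot_mem_Ioo hα hs0 hs'
    (fun t ht => (hsb t ht).1) hth (Ioo_subset_Icc_self ht) hst.le hx hp.2) hp

theorem tendsto_hitTime (hα : 0 < α) (hs0 : s 0 = s₀)
    (hs' : ∀ t ∈ Icc 0 T, HasDerivWithinAt s (s' t) (Icc 0 T) t)
    (hs'0 : ∀ t ∈ Icc 0 T, s' t < 0)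
    (hth : IsHitTime α s₀ T s th)
    {xb tb : ℝ} (htb : tb ∈ Ioo 0 T) (hxb : xb - α * tb = s₀) :
    Tendsto th (𝓝[{p | s p.2 < p.1 ∧ p.1 < s₀ + α * p.2}] (xb, tb)) (𝓝[Icc 0 T] 0) := by
  set l := 𝓝[{p : ℝ × ℝ | s p.2 < p.1 ∧ p.1 < s₀ + α * p.2}] (xb, tb)
  have hanti := antitoneOn_Icc_of_hasDerivWithinAt_nonpos hs' fun t ht => (hs'0 t ht).le
  have hbound : ∀ᶠ p in l, th p ∈ Icc 0 T ∧ th p ≤ (s₀ + α * p.2 - p.1) / α := by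
    filter_upwards [self_mem_nhdsWithin,
      mem_nhdsWithin_of_mem_nhds (continuous_snd.continuousAt.preimage_mem_nhds
        (Icc_mem_nhds htb.1 htb.2))] with p hp hpT
    obtain ⟨hτt, hτe⟩ := hth p.1 p.2 hpT.1 hpT.2 hp.1.le hp.2.le
    have hτT : th p ∈ Icc 0 T := ⟨hτt.1, hτt.2.trans hpT.2⟩
    have hsτ := hanti ⟨le_rfl, hτT.1.trans hτT.2⟩ hτT hτt.1
    refine ⟨hτT, (le_div_iff₀ hα).2 ?_⟩
    rw [hs0] at hsτ
    linarith
  have hup : Tendsto (fun p : ℝ × ℝ => (s₀ + α * p.2 - p.1) / α) l (𝓝 0) := by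
    have h := ((by fun_prop : Continuous fun p : ℝ × ℝ => (s₀ + α * p.2 - p.1) / α).tendsto
      (xb, tb)).mono_left (nhdsWithin_le_nhds (s := {p | s p.2 < p.1 ∧ p.1 < s₀ + α * p.2}))
    rwa [show s₀ + α * tb - xb = 0 by linarith, zero_div] at h
  exact tendsto_nhdsWithin_iff.2 ⟨tendsto_of_tendsto_of_tendsto_of_le_of_le' tendsto_const_nhds
    hup (hbound.mono fun _ h => h.1.1) (hbound.mono fun _ h => h.2), hbound.mono fun _ h => h.1⟩

theorem tendsto_deriv_uRegII {xb tb : ℝ} (hα : 0 < α)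
    (huin0' : ∀ x ∈ Icc s₀ 1, HasDerivWithinAt uin0 (uin0' x) (Icc s₀ 1) x)
    (huin0'c : ContinuousOn uin0' (Icc s₀ 1)) (huin1 : ContinuousOn uin1 (Icc s₀ 1))
    (hs0 : s 0 = s₀) (hs' : ∀ t ∈ Icc 0 T, HasDerivWithinAt s (s' t) (Icc 0 T) t)
    (hs'c : ContinuousOn s' (Icc 0 T)) (hsb : ∀ t ∈ Icc 0 T, -α < s' t ∧ s' t < 0)
    (hth : IsHitTime α s₀ T s th)
    (htb : tb ∈ Ioo 0 T) (hxb : xb - α * tb = s₀) (hxb1 : xb + α * tb < 1) :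
    Tendsto (fun p : ℝ × ℝ => deriv (uRegII α uin0 uin1 s th p.1) p.2)
      (𝓝[{p | s p.2 < p.1 ∧ p.1 < s₀ + α * p.2}] (xb, tb))
      (𝓝 ((α * uin0' (xb + α * tb) + uin1 (xb + α * tb)) / 2
        - (α + s' 0) / (α - s' 0) * (α * uin0' s₀ + uin1 s₀) / 2)) := by
  set l := 𝓝[{p : ℝ × ℝ | s p.2 < p.1 ∧ p.1 < s₀ + α * p.2}] (xb, tb)
  have hs₀b : s₀ < xb + α * tb := by nlinarith [htb.1]
  have h0 : (0 : ℝ) ∈ Icc 0 T := ⟨le_rfl, (htb.1.trans htb.2).le⟩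
  have hp : Tendsto (fun p : ℝ × ℝ => p.1 + α * p.2) l (𝓝 (xb + α * tb)) :=
    ((by fun_prop : Continuous fun p : ℝ × ℝ => p.1 + α * p.2).tendsto _).mono_left
      nhdsWithin_le_nhds
  have hreg : ∀ᶠ p in l, p.2 ∈ Ioo 0 T ∧ (s p.2 < p.1 ∧ p.1 < s₀ + α * p.2) ∧
      p.1 + α * p.2 ∈ Ioo s₀ 1 := by
    have hT : ∀ᶠ p in l, p.2 ∈ Ioo 0 T := mem_nhdsWithin_of_mem_nhds
      (continuous_snd.continuousAt.preimage_mem_nhds (Ioo_mem_nhds htb.1 htb.2))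
    have hR : ∀ᶠ p in l, s p.2 < p.1 ∧ p.1 < s₀ + α * p.2 := self_mem_nhdsWithin
    exact hT.and (hR.and (hp.eventually (Ioo_mem_nhds hs₀b hxb1)))
  refine tendsto_deriv_of_eventually_hasDerivAt (hreg.mono fun p hp =>
    hasDerivAt_uRegII_of_mem hα huin0' huin1 hs0 hs' hsb hth hp.1 hp.2.1.1 hp.2.1.2 hp.2.2) ?_
  have hτ := tendsto_hitTime hα hs0 hs' (fun t ht => (hsb t ht).2) hth htb hxb
  have hs'τ : Tendsto (fun p => s' (th p)) l (𝓝 (s' 0)) := (hs'c 0 h0).tendsto.comp hτ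
  have hfoot : Tendsto (fun p => s (th p) + α * th p) l (𝓝 s₀) := by
    simpa [hs0] using ((hs' 0 h0).continuousWithinAt.tendsto.comp hτ).add
      ((tendsto_nhdsWithin_iff.1 hτ).1.const_mul α)
  have hfootI : ∀ᶠ p in l, s (th p) + α * th p ∈ Icc s₀ 1 :=
    hreg.mono fun p hp => Ioo_subset_Icc_self (foot_mem_Ioo hα hs0 hs' (fun t ht => (hsb t ht).1)
      hth (Ioo_subset_Icc_self hp.1) hp.2.1.1.le hp.2.1.2 hp.2.2.2)
  have hs₀I : s₀ ∈ Icc s₀ 1 := ⟨le_rfl, (hs₀b.trans hxb1).le⟩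
  have hbI : xb + α * tb ∈ Icc s₀ 1 := ⟨hs₀b.le, hxb1.le⟩
  have hpI : ∀ᶠ p in l, p.1 + α * p.2 ∈ Icc s₀ 1 := hreg.mono fun _ h => Ioo_subset_Icc_self h.2.2
  have hne : α - s' 0 ≠ 0 := by linarith [hsb 0 h0]
  exact ((((huin0'c.tendsto_comp_of_eventually_mem hbI hp hpI).const_mul α).add
    (huin1.tendsto_comp_of_eventually_mem hbI hp hpI)).div_const 2).sub
    ((((tendsto_const_nhds.add hs'τ).div (tendsto_const_nhds.sub hs'τ) hne).mul
      (((huin0'c.tendsto_comp_of_eventually_mem hs₀I hfoot hfootI).const_mul α).add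
        (huin1.tendsto_comp_of_eventually_mem hs₀I hfoot hfootI))).div_const 2)

end RegionII

theorem incident_sub_reflected (α σ a b : ℝ) (hσ : σ ≠ α) :
    (α * a - b) / 2 - (α + σ) / (α - σ) * (α * a + b) / 2 = α / (σ - α) * (σ * a + b) := by
  have h₁ : α - σ ≠ 0 := sub_ne_zero.2 hσ.symm
  have h₂ : σ - α ≠ 0 := sub_ne_zero.2 hσ
  field_simp
  ring

theorem jump_of_ut_across_sigma_general (α s₀ T : ℝ)
    (uin0 uin1 uin0' : ℝ → ℝ) (s s' : ℝ → ℝ) (th : ℝ × ℝ → ℝ)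
    (hα : 0 < α)
    -- `u_{in0}` is C¹ on `[s₀,1]` with derivative `uin0'`, `u_{in1}` is continuous
    (huin0' : ∀ x ∈ Set.Icc s₀ 1, HasDerivWithinAt uin0 (uin0' x) (Set.Icc s₀ 1) x)
    (huin0'c : ContinuousOn uin0' (Set.Icc s₀ 1))
    (huin1 : ContinuousOn uin1 (Set.Icc s₀ 1))
    -- `s` is C¹ on `[0,T]` with `s(0) = s₀` and `−α < ṡ < 0`
    (hs0 : s 0 = s₀)
    (hs' : ∀ t ∈ Set.Icc (0 : ℝ) T, HasDerivWithinAt s (s' t) (Set.Icc 0 T) t)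
    (hs'c : ContinuousOn s' (Set.Icc 0 T))
    (hsb : ∀ t ∈ Set.Icc (0 : ℝ) T, -α < s' t ∧ s' t < 0)
    -- `t̂` solves `s(t̂) − α t̂ = x − αt` with `t̂ ∈ [0,t]`
    (hth : ∀ x t : ℝ, 0 ≤ t → t ≤ T → s t ≤ x → x ≤ s₀ + α * t →
      th (x, t) ∈ Set.Icc 0 t ∧ s (th (x, t)) - α * th (x, t) = x - α * t) :
    ∀ xb tb : ℝ, 0 < tb → tb < T → xb - α * tb = s₀ → xb + α * tb < 1 →
      ∃ LI LII : ℝ,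
        Tendsto (fun p : ℝ × ℝ => deriv (fun t => uRegI α uin0 uin1 p.1 t) p.2)
          (nhdsWithin (xb, tb)
            {p : ℝ × ℝ | 0 < p.2 ∧ p.2 < T ∧ s₀ + α * p.2 < p.1 ∧ p.1 < 1})
          (nhds LI) ∧
        Tendsto (fun p : ℝ × ℝ => deriv (fun t => uRegII α uin0 uin1 s th p.1 t) p.2)
          (nhdsWithin (xb, tb)
            {p : ℝ × ℝ | 0 < p.2 ∧ p.2 < T ∧ s p.2 < p.1 ∧ p.1 < s₀ + α * p.2})
          (nhds LII) ∧
        LII - LI = (α / (s' 0 - α)) * (s' 0 * uin0' s₀ + uin1 s₀) ∧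
        (LI = LII ↔ s' 0 * uin0' s₀ + uin1 s₀ = 0) := by
  intro xb tb htb htbT hxb hxb1
  have hσ : s' 0 ≠ α := by linarith [hsb 0 ⟨le_rfl, (htb.trans htbT).le⟩]
  have hjump := incident_sub_reflected α (s' 0) (uin0' s₀) (uin1 s₀) hσ
  refine ⟨_, _,
    (tendsto_deriv_uRegI hα huin0' huin0'c huin1 htb hxb hxb1).mono_left
      (nhdsWithin_mono _ fun p hp => hp.2.2.1),
    (tendsto_deriv_uRegII hα huin0' huin0'c huin1 hs0 hs' hs'c hsb hth ⟨htb, htbT⟩ hxb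
      hxb1).mono_left (nhdsWithin_mono _ fun p hp => hp.2.2),
    by rw [sub_sub_sub_cancel_left, hjump], ?_⟩
  rw [eq_comm, ← sub_eq_zero, sub_sub_sub_cancel_left, hjump, mul_eq_zero,
    or_iff_right (div_ne_zero hα.ne' (sub_ne_zero.2 hσ))]

theorem jump_of_ut_across_sigma (α s₀ T : ℝ)
    (uin0 uin1 uin0' : ℝ → ℝ) (s s' : ℝ → ℝ) (th : ℝ × ℝ → ℝ)
    (hα : 0 < α) (hs₀ : s₀ ∈ Set.Ioc 0 (1 / 2 : ℝ))
    (hT : 0 < T) (hT' : T ≤ (1 - s₀) / α)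
    -- `u_{in0}` is C¹ on `[s₀,1]` with derivative `uin0'`, `u_{in1}` is continuous
    (huin0' : ∀ x ∈ Set.Icc s₀ 1, HasDerivWithinAt uin0 (uin0' x) (Set.Icc s₀ 1) x)
    (huin0'c : ContinuousOn uin0' (Set.Icc s₀ 1))
    (huin1 : ContinuousOn uin1 (Set.Icc s₀ 1))
    -- `s` is C¹ on `[0,T]` with `s(0) = s₀` and `−α < ṡ < 0`
    (hs0 : s 0 = s₀)
    (hs' : ∀ t ∈ Set.Icc (0 : ℝ) T, HasDerivWithinAt s (s' t) (Set.Icc 0 T) t)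
    (hs'c : ContinuousOn s' (Set.Icc 0 T))
    (hsb : ∀ t ∈ Set.Icc (0 : ℝ) T, -α < s' t ∧ s' t < 0)
    -- `t̂` solves `s(t̂) − α t̂ = x − αt` with `t̂ ∈ [0,t]`
    (hth : ∀ x t : ℝ, 0 ≤ t → t ≤ T → s t ≤ x → x ≤ s₀ + α * t →
      th (x, t) ∈ Set.Icc 0 t ∧ s (th (x, t)) - α * th (x, t) = x - α * t) :
    ∀ xb tb : ℝ, 0 < tb → tb < T → xb - α * tb = s₀ → xb + α * tb < 1 →
      ∃ LI LII : ℝ,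
        Tendsto (fun p : ℝ × ℝ => deriv (fun t => uRegI α uin0 uin1 p.1 t) p.2)
          (nhdsWithin (xb, tb)
            {p : ℝ × ℝ | 0 < p.2 ∧ p.2 < T ∧ s₀ + α * p.2 < p.1 ∧ p.1 < 1})
          (nhds LI) ∧
        Tendsto (fun p : ℝ × ℝ => deriv (fun t => uRegII α uin0 uin1 s th p.1 t) p.2)
          (nhdsWithin (xb, tb)
            {p : ℝ × ℝ | 0 < p.2 ∧ p.2 < T ∧ s p.2 < p.1 ∧ p.1 < s₀ + α * p.2})
          (nhds LII) ∧
        LII - LI = (α / (s' 0 - α)) * (s' 0 * uin0' s₀ + uin1 s₀) ∧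
        (LI = LII ↔ s' 0 * uin0' s₀ + uin1 s₀ = 0) :=
  jump_of_ut_across_sigma_general α s₀ T uin0 uin1 uin0' s s' th hα huin0' huin0'c huin1 hs0 hs'
    hs'c hsb hth
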